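/- arXiv:1008.0192 — 2 statements merged into one kernel-verified Lean document; each statement's English description precedes it below -/
import Mathlib

section
/- Let (T, d) be a metric space. T is an ℝ-tree if and only if T is connected and satisfies the four-point inequality: for all σ₁, σ₂, σ₃, σ₄ ∈ T, d(σ₁,σ₂) + d(σ₃,σ₄) ≤ max( d(σ₁,σ₃) + d(σ₂,σ₄), d(σ₁,σ₄) + d(σ₂,σ₃) ). -/
open Set

/-- A geodesic parametrization of the arc from `x` to `y`:
an isometric embedding of `[0, dist x y]` with the right endpoints. -/
def IsGeodesicArc {T : Type*} [MetricSpace T] (x y : T) (f : ℝ → T) : Prop :=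
  (∀ s t : ℝ, s ∈ Set.Icc 0 (dist x y) → t ∈ Set.Icc 0 (dist x y) →
    dist (f s) (f t) = |s - t|) ∧ f 0 = x ∧ f (dist x y) = y

/-- `(T,d)` is an ℝ-tree: (a) any two points are joined by a unique geodesic arc, and
(b) every continuous injective path between two points has the geodesic arc as image. -/
def IsRTree (T : Type*) [MetricSpace T] : Prop :=
  ∀ x y : T,
    (∃ f : ℝ → T, IsGeodesicArc x y f) ∧
    (∀ f g : ℝ → T, IsGeodesicArc x y f → IsGeodesicArc x y g →
      Set.EqOn f g (Set.Icc 0 (dist x y))) ∧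
    (∀ j : ℝ → T, ContinuousOn j (Set.Icc 0 1) → Set.InjOn j (Set.Icc 0 1) →
      j 0 = x → j 1 = y →
      ∀ f : ℝ → T, IsGeodesicArc x y f →
        j '' Set.Icc 0 1 = f '' Set.Icc 0 (dist x y))

/-! In a space satisfying the four-point condition, a point `w` sits at height `(x | y)_w` above
the point at distance `(y | w)_x` from `x` on `[x, y]`, and points of height `0` are at distance
`|(y | w)_x - (y | v)_x|` from each other. In a connected set containing `x` and `y`, every
position `t` is attained by a point of height `0`, for otherwise the points with position `< t`
and those with position `> t` or height `> 0` would separate it; this gives the unique geodesic,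
shows that every arc from `x` to `y` covers it, and, applied between the last exit from and the
first return to the geodesic, that no arc leaves it.

Conversely, in an ℝ-tree the geodesics from `x` to `y` and to `z` agree up to a last time `c`, and
their tails beyond `c` form an arc from `y` to `z`, which must be the geodesic. Comparing these
branch points for two points `p, q` over one geodesic `[a, b]` yields the four-point inequality. -/

open Function

section GromovProduct

variable {T : Type*} [PseudoMetricSpace T] {x y w v : T}

/-- The Gromov product `(x | y)_p`, with the base point first. -/
noncomputable def gromovProduct (p x y : T) : ℝ := (dist p x + dist p y - dist x y) / 2

def metricSegment (x y : T) : Set T := {w | dist x w + dist w y = dist x y}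

lemma mem_metricSegment : w ∈ metricSegment x y ↔ dist x w + dist w y = dist x y :=
  Iff.rfl

def FourPointCondition (T : Type*) [PseudoMetricSpace T] : Prop :=
  ∀ σ₁ σ₂ σ₃ σ₄ : T,
    dist σ₁ σ₂ + dist σ₃ σ₄ ≤ max (dist σ₁ σ₃ + dist σ₂ σ₄) (dist σ₁ σ₄ + dist σ₂ σ₃)

lemma gromovProduct_nonneg (p x y : T) : 0 ≤ gromovProduct p x y := by
  unfold gromovProduct
  linarith [dist_triangle x p y, dist_comm x p]

lemma lipschitzWith_gromovProduct_base (x y : T) : LipschitzWith 1 (gromovProduct · x y) := by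
  refine LipschitzWith.of_dist_le_mul fun p q => ?_
  rw [Real.dist_eq, NNReal.coe_one, one_mul, abs_sub_le_iff]
  unfold gromovProduct
  constructor <;> linarith [dist_triangle p q x, dist_triangle p q y, dist_triangle q p x,
    dist_triangle q p y, dist_comm p q]

lemma lipschitzWith_gromovProduct_right (p x : T) : LipschitzWith 1 (gromovProduct p x) := by
  refine LipschitzWith.of_dist_le_mul fun y w => ?_
  rw [Real.dist_eq, NNReal.coe_one, one_mul, abs_sub_le_iff]
  unfold gromovProduct
  constructor <;> linarith [dist_triangle p y w, dist_triangle p w y, dist_triangle x y w,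
    dist_triangle x w y, dist_comm y w]

lemma dist_le_of_mem_metricSegment (hw : w ∈ metricSegment x y) : dist x w ≤ dist x y := by
  rw [← hw]
  linarith [dist_nonneg (x := w) (y := y)]

namespace FourPointCondition

variable (H : FourPointCondition T)
include H

/-- In a tree, `w` and `v` branch off `[x, y]` at distances `(y | w)_x < (y | v)_x` from `x`,
and the path from `w` to `v` passes through both branch points. -/
lemma dist_add_dist_le (h : gromovProduct x y w < gromovProduct x y v) :
    dist x v + dist y w ≤ dist x y + dist w v := by
  unfold gromovProduct at h
  rcases le_max_iff.1 (H x v y w) with h' | h'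
  · linarith [dist_comm v w]
  · linarith [dist_comm v y]

lemma isOpen_setOf_branch (x y : T) (t : ℝ) :
    IsOpen {w | t < gromovProduct x y w ∨ (gromovProduct x y w = t ∧ 0 < gromovProduct w x y)} := by
  rw [Metric.isOpen_iff]
  rintro w (hw | ⟨hwt, hw⟩)
  · obtain ⟨ε, hε, hball⟩ := Metric.isOpen_iff.1
      (isOpen_lt continuous_const (lipschitzWith_gromovProduct_right x y).continuous) w hw
    exact ⟨ε, hε, fun v hv => Or.inl (hball hv)⟩
  · refine ⟨gromovProduct w x y, hw, fun v hv => ?_⟩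
    rw [Metric.mem_ball] at hv
    rcases lt_trichotomy (gromovProduct x y v) t with hvt | hvt | hvt
    · have hsep := H.dist_add_dist_le (hwt ▸ hvt)
      have hv₀ := gromovProduct_nonneg v x y
      unfold gromovProduct at *
      linarith [dist_comm x w, dist_comm y w, dist_comm x v, dist_comm y v]
    · have := (lipschitzWith_gromovProduct_base x y).dist_le_mul v w
      rw [Real.dist_eq, NNReal.coe_one, one_mul] at this
      exact Or.inr ⟨hvt, by linarith [abs_sub_le_iff.1 this]⟩
    · exact Or.inl hvt

lemma dist_of_mem_metricSegment (hw : w ∈ metricSegment x y) (hv : v ∈ metricSegment x y) :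
    dist w v = |dist x w - dist x v| := by
  refine le_antisymm ?_ (by simpa only [dist_comm x] using abs_dist_sub_le w v x)
  rw [mem_metricSegment] at hw hv
  rcases le_max_iff.1 (H w v x y) with h | h
  · linarith [le_abs_self (dist x w - dist x v), dist_comm w x]
  · linarith [neg_abs_le (dist x w - dist x v), dist_comm v x]

lemma exists_mem_metricSegment_dist_eq {P : Set T} (hP : IsPreconnected P) (hx : x ∈ P)
    (hy : y ∈ P) {t : ℝ} (ht : t ∈ Icc 0 (dist x y)) :
    ∃ w ∈ P, w ∈ metricSegment x y ∧ dist x w = t := by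
  rcases ht.1.eq_or_lt with rfl | ht₀
  · exact ⟨x, hx, by simp [metricSegment], dist_self x⟩
  rcases ht.2.eq_or_lt with rfl | htD
  · exact ⟨y, hy, by simp [metricSegment], rfl⟩
  by_contra! hP'
  have hcover : P ⊆ {w | gromovProduct x y w < t} ∪
      {w | t < gromovProduct x y w ∨ (gromovProduct x y w = t ∧ 0 < gromovProduct w x y)} := by
    intro w hw
    rcases lt_trichotomy (gromovProduct x y w) t with h | h | h
    · exact Or.inl h
    · refine Or.inr (Or.inr ⟨h, (gromovProduct_nonneg w x y).lt_of_ne fun h₀ => ?_⟩)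
      unfold gromovProduct at h h₀
      exact hP' w hw (by rw [mem_metricSegment]; linarith [dist_comm w x, dist_comm w y])
        (by linarith [dist_comm w x, dist_comm w y])
    · exact Or.inr (Or.inl h)
  obtain ⟨w, -, hwU, hwV⟩ := hP _ _
    (isOpen_lt (lipschitzWith_gromovProduct_right x y).continuous continuous_const)
    (H.isOpen_setOf_branch x y t) hcover
    ⟨x, hx, by simpa [gromovProduct, dist_comm] using ht₀⟩
    ⟨y, hy, Or.inl (by simpa [gromovProduct, dist_comm] using htD)⟩
  rcases hwV with h | ⟨h, -⟩
  exacts [lt_asymm h hwU, hwU.ne h]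

end FourPointCondition

end GromovProduct

namespace FourPointCondition

variable {T : Type*} [MetricSpace T] {x y w v : T} (H : FourPointCondition T)
include H

lemma eq_of_mem_metricSegment (hw : w ∈ metricSegment x y) (hv : v ∈ metricSegment x y)
    (h : dist x w = dist x v) : w = v := by
  rw [← dist_eq_zero, H.dist_of_mem_metricSegment hw hv, h, sub_self, abs_zero]

lemma metricSegment_subset_of_isPreconnected {P : Set T} (hP : IsPreconnected P) (hx : x ∈ P)
    (hy : y ∈ P) : metricSegment x y ⊆ P := by
  intro m hm
  obtain ⟨w, hwP, hw, hwm⟩ := H.exists_mem_metricSegment_dist_eq hP hx hy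
    ⟨dist_nonneg, dist_le_of_mem_metricSegment hm⟩
  rwa [← H.eq_of_mem_metricSegment hw hm hwm]

end FourPointCondition

lemma IsClosed.exists_lt_lt_forall_mem_le_or_le {K : Set ℝ} (hK : IsClosed K) {u : ℝ}
    (hu : u ∉ K) (hlo : (K ∩ Iic u).Nonempty) (hhi : (K ∩ Ici u).Nonempty) :
    ∃ u₁ ∈ K, ∃ u₂ ∈ K, u₁ < u ∧ u < u₂ ∧ ∀ v ∈ K, v ≤ u₁ ∨ u₂ ≤ v := by
  have hlo_bdd : BddAbove (K ∩ Iic u) := ⟨u, fun _ hv => hv.2⟩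
  have hhi_bdd : BddBelow (K ∩ Ici u) := ⟨u, fun _ hv => hv.2⟩
  obtain ⟨hu₁K, hu₁⟩ := (hK.inter isClosed_Iic).csSup_mem hlo hlo_bdd
  obtain ⟨hu₂K, hu₂⟩ := (hK.inter isClosed_Ici).csInf_mem hhi hhi_bdd
  refine ⟨_, hu₁K, _, hu₂K, lt_of_le_of_ne hu₁ fun h => hu (h ▸ hu₁K),
    lt_of_le_of_ne hu₂ fun h => hu (h ▸ hu₂K), fun v hv => ?_⟩
  rcases le_total v u with h | h
  exacts [Or.inl (le_csSup hlo_bdd ⟨hv, h⟩), Or.inr (csInf_le hhi_bdd ⟨hv, h⟩)]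

namespace IsGeodesicArc

variable {T : Type*} [MetricSpace T] {x y : T} {f : ℝ → T} (hf : IsGeodesicArc x y f)
include hf

lemma dist_left {s : ℝ} (hs : s ∈ Icc 0 (dist x y)) : dist x (f s) = s := by
  rw [← hf.2.1, hf.1 0 s ⟨le_rfl, dist_nonneg⟩ hs, zero_sub, abs_neg, abs_of_nonneg hs.1]

lemma dist_right {s : ℝ} (hs : s ∈ Icc 0 (dist x y)) : dist (f s) y = dist x y - s := by
  rw [← hf.2.2, hf.1 s (dist x y) hs ⟨dist_nonneg, le_rfl⟩, hf.2.2, abs_sub_comm,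
    abs_of_nonneg (sub_nonneg.2 hs.2)]

lemma mem_metricSegment {s : ℝ} (hs : s ∈ Icc 0 (dist x y)) : f s ∈ metricSegment x y := by
  rw [_root_.mem_metricSegment, hf.dist_left hs, hf.dist_right hs, add_sub_cancel]

lemma continuousOn : ContinuousOn f (Icc 0 (dist x y)) :=
  (LipschitzOnWith.of_dist_le_mul fun s hs t ht => by
    rw [hf.1 s t hs ht, NNReal.coe_one, one_mul, Real.dist_eq]).continuousOn

end IsGeodesicArc

namespace FourPointCondition

variable {T : Type*} [MetricSpace T] (H : FourPointCondition T)
include H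

lemma exists_isGeodesicArc [PreconnectedSpace T] (x y : T) : ∃ f, IsGeodesicArc x y f := by
  have hpoint : ∀ t ∈ Icc 0 (dist x y), ∃ w ∈ metricSegment x y, dist x w = t := fun t ht =>
    let ⟨w, _, hw⟩ :=
      H.exists_mem_metricSegment_dist_eq isPreconnected_univ (mem_univ x) (mem_univ y) ht
    ⟨w, hw⟩
  have : Nonempty T := ⟨x⟩
  choose! f hf hfx using hpoint
  have hD : dist x y ∈ Icc 0 (dist x y) := ⟨dist_nonneg, le_rfl⟩
  refine ⟨f, fun s t hs ht => ?_, ?_, ?_⟩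
  · rw [H.dist_of_mem_metricSegment (hf s hs) (hf t ht), hfx s hs, hfx t ht]
  · rw [← dist_eq_zero, dist_comm, hfx 0 ⟨le_rfl, dist_nonneg⟩]
  · have := hf _ hD
    rwa [mem_metricSegment, hfx _ hD, add_eq_left, dist_eq_zero] at this

lemma eqOn_of_isGeodesicArc {x y : T} {f g : ℝ → T} (hf : IsGeodesicArc x y f)
    (hg : IsGeodesicArc x y g) : EqOn f g (Icc 0 (dist x y)) := fun _ hs =>
  H.eq_of_mem_metricSegment (hf.mem_metricSegment hs) (hg.mem_metricSegment hs)
    ((hf.dist_left hs).trans (hg.dist_left hs).symm)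

lemma image_isGeodesicArc_subset_image {x y : T} {f j : ℝ → T} (hf : IsGeodesicArc x y f)
    (hjc : ContinuousOn j (Icc 0 1)) (hj0 : j 0 = x) (hj1 : j 1 = y) :
    f '' Icc 0 (dist x y) ⊆ j '' Icc 0 1 := by
  rintro _ ⟨s, hs, rfl⟩
  exact H.metricSegment_subset_of_isPreconnected (isPreconnected_Icc.image j hjc)
    ⟨0, left_mem_Icc.2 zero_le_one, hj0⟩ ⟨1, right_mem_Icc.2 zero_le_one, hj1⟩
    (hf.mem_metricSegment hs)

/-- An arc leaving the geodesic `f` at time `u₁` and returning at `u₂` would, by connectedness,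
pass through the midpoint between its exit and entry points, which lies on `f`. -/
lemma image_subset_image_isGeodesicArc {x y : T} {f j : ℝ → T} (hf : IsGeodesicArc x y f)
    (hjc : ContinuousOn j (Icc 0 1)) (hji : InjOn j (Icc 0 1)) (hj0 : j 0 = x) (hj1 : j 1 = y) :
    j '' Icc 0 1 ⊆ f '' Icc 0 (dist x y) := by
  set S := f '' Icc 0 (dist x y)
  set K := Icc 0 1 ∩ j ⁻¹' S
  have hK : IsClosed K := hjc.preimage_isClosed_of_isClosed isClosed_Icc
    (isCompact_Icc.image_of_continuousOn hf.continuousOn).isClosed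
  have h0K : (0 : ℝ) ∈ K :=
    ⟨left_mem_Icc.2 zero_le_one, 0, ⟨le_rfl, dist_nonneg⟩, hf.2.1.trans hj0.symm⟩
  have h1K : (1 : ℝ) ∈ K :=
    ⟨right_mem_Icc.2 zero_le_one, dist x y, ⟨dist_nonneg, le_rfl⟩, hf.2.2.trans hj1.symm⟩
  rintro _ ⟨u, hu, rfl⟩
  by_contra huS
  obtain ⟨u₁, hu₁, u₂, hu₂, h₁, h₂, hgap⟩ := hK.exists_lt_lt_forall_mem_le_or_le
    (fun h => huS h.2) ⟨0, h0K, hu.1⟩ ⟨1, h1K, hu.2⟩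
  obtain ⟨s₁, hs₁, hfs₁⟩ := hu₁.2
  obtain ⟨s₂, hs₂, hfs₂⟩ := hu₂.2
  have hs : 0 < |s₁ - s₂| := abs_pos.2 <| sub_ne_zero.2 fun h =>
    (h₁.trans h₂).ne (hji hu₁.1 hu₂.1 (by rw [← hfs₁, ← hfs₂, h]))
  set s := (s₁ + s₂) / 2 with hs_def
  have hsD : s ∈ Icc 0 (dist x y) :=
    ⟨by linarith [hs₁.1, hs₂.1], by linarith [hs₁.2, hs₂.2]⟩
  have hd₁ : dist (f s₁) (f s) = |s₁ - s₂| / 2 := by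
    rw [hf.1 _ _ hs₁ hsD, show s₁ - s = (s₁ - s₂) / 2 by ring, abs_div, abs_two]
  have hd₂ : dist (f s) (f s₂) = |s₁ - s₂| / 2 := by
    rw [hf.1 _ _ hsD hs₂, show s - s₂ = (s₁ - s₂) / 2 by ring, abs_div, abs_two]
  have hmid : f s ∈ metricSegment (f s₁) (f s₂) := by
    rw [mem_metricSegment, hd₁, hd₂, hf.1 _ _ hs₁ hs₂]
    ring
  obtain ⟨v, hv, hjv⟩ := H.metricSegment_subset_of_isPreconnected
    (isPreconnected_Icc.image j (hjc.mono (Icc_subset_Icc hu₁.1.1 hu₂.1.2)))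
    ⟨u₁, left_mem_Icc.2 (h₁.trans h₂).le, hfs₁.symm⟩
    ⟨u₂, right_mem_Icc.2 (h₁.trans h₂).le, hfs₂.symm⟩ hmid
  rcases hgap v ⟨⟨hu₁.1.1.trans hv.1, hv.2.trans hu₂.1.2⟩, s, hsD, hjv.symm⟩ with h | h
  · rw [le_antisymm h hv.1, ← hfs₁] at hjv
    rw [hjv, dist_self] at hd₁
    linarith
  · rw [le_antisymm hv.2 h, ← hfs₂] at hjv
    rw [← hjv, dist_self] at hd₂
    linarith

end FourPointCondition


namespace IsGeodesicArc

variable {T : Type*} [MetricSpace T] {x y : T} {f : ℝ → T}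

lemma tail (hf : IsGeodesicArc x y f) {c : ℝ} (hc : c ∈ Icc 0 (dist x y)) {p : T}
    (hp : f c = p) : IsGeodesicArc p y (fun r => f (c + r)) := by
  have hpy : dist p y = dist x y - c := hp ▸ hf.dist_right hc
  refine ⟨fun r r' hr hr' => ?_, by simpa using hp, by simp only [hpy, add_sub_cancel, hf.2.2]⟩
  rw [hpy] at hr hr'
  rw [hf.1 _ _ ⟨by linarith [hc.1, hr.1], by linarith [hr.2]⟩
    ⟨by linarith [hc.1, hr'.1], by linarith [hr'.2]⟩, add_sub_add_left_eq_sub]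

lemma exists_isGreatest_setOf_eq {z : T} {g : ℝ → T} (hf : IsGeodesicArc x y f)
    (hg : IsGeodesicArc x z g) :
    ∃ c, IsGreatest (Icc 0 (min (dist x y) (dist x z)) ∩ {s | f s = g s}) c := by
  refine IsCompact.exists_isGreatest (isCompact_Icc.of_isClosed_subset ?_ inter_subset_left)
    ⟨0, ⟨le_rfl, le_min dist_nonneg dist_nonneg⟩, hf.2.1.trans hg.2.1.symm⟩
  exact ((hf.continuousOn.mono (Icc_subset_Icc_right (min_le_left _ _))).prodMk
    (hg.continuousOn.mono (Icc_subset_Icc_right (min_le_right _ _)))).preimage_isClosed_of_isClosed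
    isClosed_Icc isClosed_diagonal

def toPath (hf : IsGeodesicArc x y f) : Path x y where
  toFun t := f (t * dist x y)
  continuous_toFun := hf.continuousOn.comp_continuous (by fun_prop) fun t =>
    ⟨mul_nonneg t.2.1 dist_nonneg, mul_le_of_le_one_left dist_nonneg t.2.2⟩
  source' := by simp [hf.2.1]
  target' := by simp [hf.2.2]

lemma range_toPath_subset (hf : IsGeodesicArc x y f) :
    range hf.toPath ⊆ f '' Icc 0 (dist x y) := by
  rintro _ ⟨t, rfl⟩
  exact ⟨t * dist x y, ⟨mul_nonneg t.2.1 dist_nonneg, mul_le_of_le_one_left dist_nonneg t.2.2⟩, rfl⟩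

lemma injective_toPath (hf : IsGeodesicArc x y f) (hxy : x ≠ y) : Injective hf.toPath := by
  intro s t hst
  have hmem : ∀ t : unitInterval, (t : ℝ) * dist x y ∈ Icc 0 (dist x y) := fun t =>
    ⟨mul_nonneg t.2.1 dist_nonneg, mul_le_of_le_one_left dist_nonneg t.2.2⟩
  have h := hf.1 _ _ (hmem s) (hmem t)
  change f _ = f _ at hst
  rw [hst, dist_self, eq_comm, abs_eq_zero, ← sub_mul, mul_eq_zero, sub_eq_zero] at h
  exact Subtype.ext (h.resolve_right (dist_ne_zero.2 hxy))

end IsGeodesicArc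

lemma Path.injective_trans {X : Type*} [TopologicalSpace X] {x y z : X} {γ₁ : Path x y}
    {γ₂ : Path y z} (h₁ : Injective γ₁) (h₂ : Injective γ₂)
    (h : ∀ p ∈ range γ₁, p ∈ range γ₂ → p = y) : Injective (γ₁.trans γ₂) := by
  have hy₂ : ∀ {s}, γ₂ s = y → s = 0 := fun hs => h₂ (hs.trans γ₂.source.symm)
  intro s t hst
  rw [Path.trans_apply, Path.trans_apply] at hst
  split_ifs at hst with hs ht ht
  · have := congrArg Subtype.val (h₁ hst)
    exact Subtype.ext (by simpa using this)
  · have := congrArg Subtype.val (hy₂ (h _ ⟨_, hst⟩ ⟨_, rfl⟩))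
    simp only [Set.Icc.coe_zero] at this
    linarith
  · have := congrArg Subtype.val (hy₂ (h _ ⟨_, hst.symm⟩ ⟨_, rfl⟩))
    simp only [Set.Icc.coe_zero] at this
    linarith
  · have := congrArg Subtype.val (h₂ hst)
    exact Subtype.ext (by simpa using this)

namespace IsRTree

variable {T : Type*} [MetricSpace T] (ht : IsRTree T)
include ht

lemma mem_metricSegment_of_mem_range {x y p : T} {γ : Path x y} (hγ : Injective γ)
    (hp : p ∈ range γ) : p ∈ metricSegment x y := by
  obtain ⟨f, hf⟩ := (ht x y).1
  have hinj : InjOn γ.extend (Icc 0 1) := fun s hs t ht hst => by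
    rw [γ.extend_apply hs, γ.extend_apply ht] at hst
    exact congrArg Subtype.val (hγ hst)
  have himage := (ht x y).2.2 γ.extend γ.continuous_extend.continuousOn hinj
    γ.extend_zero γ.extend_one f hf
  rw [γ.image_extend_of_subset subset_rfl] at himage
  obtain ⟨s, hs, rfl⟩ := himage ▸ hp
  exact hf.mem_metricSegment hs

lemma exists_branch_point {x y : T} {f : ℝ → T} (hf : IsGeodesicArc x y f) (z : T) :
    ∃ c ∈ Icc 0 (dist x y),
      dist x z = c + dist (f c) z ∧ dist y z = dist x y - c + dist (f c) z := by
  obtain ⟨g, hg⟩ := (ht x z).1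
  obtain ⟨c, ⟨hcμ, hfg⟩, hmax⟩ := hf.exists_isGreatest_setOf_eq hg
  have hcy : c ∈ Icc 0 (dist x y) := ⟨hcμ.1, hcμ.2.trans (min_le_left _ _)⟩
  have hcz : c ∈ Icc 0 (dist x z) := ⟨hcμ.1, hcμ.2.trans (min_le_right _ _)⟩
  refine ⟨c, hcy, by rw [hfg, hg.dist_right hcz]; ring, ?_⟩
  rw [← hf.dist_right hcy, dist_comm (f c) y]
  suffices f c ∈ metricSegment y z from this.symm
  by_cases hy : f c = y
  · rw [hy, mem_metricSegment, dist_self, zero_add]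
  by_cases hz : f c = z
  · rw [hz, mem_metricSegment, dist_self, add_zero]
  have hf' := hf.tail hcy rfl
  have hg' := hg.tail hcz hfg.symm
  refine ht.mem_metricSegment_of_mem_range (γ := hf'.toPath.symm.trans hg'.toPath) ?_
    (by rw [Path.trans_range]; exact Or.inr ⟨0, hg'.toPath.source⟩)
  refine Path.injective_trans
    ((hf'.injective_toPath hy).comp unitInterval.symm_bijective.injective)
    (hg'.injective_toPath hz) ?_
  rintro p hp₁ hp₂
  rw [Path.symm_range] at hp₁
  obtain ⟨r, hr, rfl⟩ := hf'.range_toPath_subset hp₁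
  obtain ⟨r', hr', hrr'⟩ := hg'.range_toPath_subset hp₂
  beta_reduce at hrr' ⊢
  rw [hf.dist_right hcy] at hr
  rw [hfg, hg.dist_right hcz] at hr'
  have hr_mem : c + r ∈ Icc 0 (dist x y) := ⟨by linarith [hr.1, hcy.1], by linarith [hr.2]⟩
  have hr'_mem : c + r' ∈ Icc 0 (dist x z) := ⟨by linarith [hr'.1, hcz.1], by linarith [hr'.2]⟩
  have hrr : r' = r := by
    have := hf.dist_left hr_mem
    rw [← hrr', hg.dist_left hr'_mem] at this
    linarith
  subst hrr
  have := hmax ⟨⟨hr_mem.1, le_min hr_mem.2 hr'_mem.2⟩, hrr'.symm⟩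
  rw [show r' = 0 by linarith [hr.1], add_zero]

lemma fourPointCondition : FourPointCondition T := by
  intro a b p q
  obtain ⟨f, hf⟩ := (ht a b).1
  obtain ⟨c₃, hc₃, hap, hbp⟩ := ht.exists_branch_point hf p
  obtain ⟨c₄, hc₄, haq, hbq⟩ := ht.exists_branch_point hf q
  have hpq := dist_triangle4 p (f c₃) (f c₄) q
  rw [hf.1 _ _ hc₃ hc₄, dist_comm p (f c₃)] at hpq
  rcases le_total c₃ c₄ with h | h
  · rw [abs_of_nonpos (sub_nonpos.2 h)] at hpq
    exact le_max_of_le_right (by linarith)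
  · rw [abs_of_nonneg (sub_nonneg.2 h)] at hpq
    exact le_max_of_le_left (by linarith)

lemma pathConnectedSpace [Nonempty T] : PathConnectedSpace T :=
  ⟨inferInstance, fun x y => ⟨(ht x y).1.choose_spec.toPath⟩⟩

end IsRTree

/-- a metric space is an ℝ-tree iff it is connected and satisfies
the four-point inequality. -/
theorem isRTree_iff_connected_fourPoint (T : Type*) [MetricSpace T] [Nonempty T] :
    IsRTree T ↔
      (ConnectedSpace T ∧
        ∀ σ₁ σ₂ σ₃ σ₄ : T,
          dist σ₁ σ₂ + dist σ₃ σ₄ ≤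
            max (dist σ₁ σ₃ + dist σ₂ σ₄) (dist σ₁ σ₄ + dist σ₂ σ₃)) := by
  refine ⟨fun ht => ⟨?_, ht.fourPointCondition⟩, fun ⟨_, (H : FourPointCondition T)⟩ x y => ?_⟩
  · have := ht.pathConnectedSpace
    infer_instance
  obtain ⟨f, hf⟩ := FourPointCondition.exists_isGeodesicArc H x y
  refine ⟨⟨f, hf⟩, fun _ _ => H.eqOn_of_isGeodesicArc, fun j hjc hji hj0 hj1 g hg => ?_⟩
  exact (H.image_subset_image_isGeodesicArc hg hjc hji hj0 hj1).antisymm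
    (H.image_isGeodesicArc_subset_image hg hjc hj0 hj1)
end

section
/- Let h: [0,∞) → [0,∞) be continuous with compact support, h(0) = 0, and not identically zero, with lifetime ζ(h) = sup{t : h(t) ≠ 0}. Define b_h(s,t) = inf_{r ∈ [s∧t, s∨t]} h(r) and d_h(s,t) = h(s) + h(t) - 2 b_h(s,t). Then d_h is a pseudometric on [0, ζ(h)] satisfying the four-point inequality: for all s₁, s₂, s₃, s₄, d_h(s₁,s₂) + d_h(s₃,s₄) ≤ max( d_h(s₁,s₃) + d_h(s₂,s₄), d_h(s₁,s₄) + d_h(s₂,s₃) ). -/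
open Set

private lemma fourpt_abs {B12 B34 B13 B24 B14 B23 : ℝ}
    (h1 : min B14 B24 ≤ B12) (h2 : min B13 B23 ≤ B12)
    (h3 : min B13 B14 ≤ B34) (h4 : min B23 B24 ≤ B34) :
    min (B13 + B24) (B14 + B23) ≤ B12 + B34 := by
  rcases min_cases B14 B24 with ⟨e1, _⟩ | ⟨e1, _⟩ <;>
  rcases min_cases B13 B23 with ⟨e2, _⟩ | ⟨e2, _⟩ <;>
  rcases min_cases B13 B14 with ⟨e3, _⟩ | ⟨e3, _⟩ <;>
  rcases min_cases B23 B24 with ⟨e4, _⟩ | ⟨e4, _⟩ <;>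
  rw [e1] at h1 <;> rw [e2] at h2 <;> rw [e3] at h3 <;> rw [e4] at h4 <;>
  first
    | exact min_le_of_left_le (by linarith)
    | exact min_le_of_right_le (by linarith)

section aux
variable {h : ℝ → ℝ}

private lemma img_ne (s t : ℝ) : (h '' Icc (min s t) (max s t)).Nonempty :=
  (nonempty_Icc.2 min_le_max).image _

private lemma img_bdd (hnn : ∀ t, 0 ≤ h t) (s t : ℝ) : BddBelow (h '' Icc (min s t) (max s t)) := by
  refine ⟨0, fun x hx => ?_⟩
  obtain ⟨r, _, rfl⟩ := hx
  exact hnn r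

private lemma B_le_left (hnn : ∀ t, 0 ≤ h t) (s t : ℝ) : sInf (h '' Icc (min s t) (max s t)) ≤ h s :=
  csInf_le (img_bdd hnn s t) ⟨s, ⟨min_le_left _ _, le_max_left _ _⟩, rfl⟩

private lemma B_le_right (hnn : ∀ t, 0 ≤ h t) (s t : ℝ) : sInf (h '' Icc (min s t) (max s t)) ≤ h t :=
  csInf_le (img_bdd hnn s t) ⟨t, ⟨min_le_right _ _, le_max_right _ _⟩, rfl⟩

private lemma B_three (hnn : ∀ t, 0 ≤ h t) (s t u : ℝ) :
    min (sInf (h '' Icc (min s t) (max s t))) (sInf (h '' Icc (min t u) (max t u)))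
      ≤ sInf (h '' Icc (min s u) (max s u)) := by
  refine le_csInf (img_ne s u) ?_
  rintro x ⟨r, ⟨hr1, hr2⟩, rfl⟩
  rcases le_total r t with hrt | hrt
  · rcases le_total s u with hsu | hsu
    · -- min s u = s, so s ≤ r; r ∈ [min s t, max s t]
      have hs : s ≤ r := le_trans (by simp [min_eq_left hsu]) hr1
      refine min_le_of_left_le (csInf_le (img_bdd hnn s t)
        ⟨r, ⟨le_trans (min_le_left _ _) hs, le_trans hrt (le_max_right _ _)⟩, rfl⟩)
    · have hu : u ≤ r := le_trans (by simp [min_eq_right hsu]) hr1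
      refine min_le_of_right_le (csInf_le (img_bdd hnn t u)
        ⟨r, ⟨le_trans (min_le_right _ _) hu, le_trans hrt (le_max_left _ _)⟩, rfl⟩)
  · rcases le_total s u with hsu | hsu
    · have hu : r ≤ u := le_trans hr2 (by simp [max_eq_right hsu])
      refine min_le_of_right_le (csInf_le (img_bdd hnn t u)
        ⟨r, ⟨le_trans (min_le_left _ _) hrt, le_trans hu (le_max_right _ _)⟩, rfl⟩)
    · have hs : r ≤ s := le_trans hr2 (by simp [max_eq_left hsu])
      refine min_le_of_left_le (csInf_le (img_bdd hnn s t)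
        ⟨r, ⟨le_trans (min_le_right _ _) hrt, le_trans hs (le_max_left _ _)⟩, rfl⟩)

end aux

/-- for a continuous compactly supported excursion h, the function
d_h(s,t) = h(s) + h(t) - 2 inf_{[s∧t, s∨t]} h is a pseudometric on [0, ζ(h)]
satisfying the four-point inequality. -/
theorem dh_pseudometric_fourPoint (h : ℝ → ℝ)
    (hcont : Continuous h) (hnn : ∀ t, 0 ≤ h t)
    (hsupp : HasCompactSupport h) (h0 : h 0 = 0) (hne : h ≠ 0) :
    let ζ : ℝ := sSup {t : ℝ | h t ≠ 0}
    let b : ℝ → ℝ → ℝ := fun s t => sInf (h '' Set.Icc (min s t) (max s t))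
    let d : ℝ → ℝ → ℝ := fun s t => h s + h t - 2 * b s t
    (∀ s ∈ Set.Icc 0 ζ, ∀ t ∈ Set.Icc 0 ζ, d s t = d t s) ∧
    (∀ s ∈ Set.Icc 0 ζ, d s s = 0) ∧
    (∀ s ∈ Set.Icc 0 ζ, ∀ t ∈ Set.Icc 0 ζ, 0 ≤ d s t) ∧
    (∀ s ∈ Set.Icc 0 ζ, ∀ t ∈ Set.Icc 0 ζ, ∀ u ∈ Set.Icc 0 ζ,
      d s u ≤ d s t + d t u) ∧
    (∀ s₁ ∈ Set.Icc 0 ζ, ∀ s₂ ∈ Set.Icc 0 ζ, ∀ s₃ ∈ Set.Icc 0 ζ, ∀ s₄ ∈ Set.Icc 0 ζ,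
      d s₁ s₂ + d s₃ s₄ ≤ max (d s₁ s₃ + d s₂ s₄) (d s₁ s₄ + d s₂ s₃)) := by
  intro ζ b d
  have hb_symm : ∀ s t, b s t = b t s := fun s t => by
    show sInf (h '' Icc (min s t) (max s t)) = sInf (h '' Icc (min t s) (max t s))
    rw [min_comm, max_comm]
  have hb_left : ∀ s t, b s t ≤ h s := fun s t => B_le_left hnn s t
  have hb_right : ∀ s t, b s t ≤ h t := fun s t => B_le_right hnn s t
  have hb_self : ∀ s, b s s = h s := fun s => by
    show sInf (h '' Icc (min s s) (max s s)) = h s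
    rw [min_self, max_self, Icc_self, image_singleton, csInf_singleton]
  have hb_three : ∀ s t u, min (b s t) (b t u) ≤ b s u := fun s t u => B_three hnn s t u
  have hd : ∀ s t, d s t = h s + h t - 2 * b s t := fun _ _ => rfl
  refine ⟨?_, ?_, ?_, ?_, ?_⟩
  · intro s _ t _
    rw [hd, hd, hb_symm]; ring
  · intro s _
    rw [hd, hb_self]; ring
  · intro s _ t _
    have := hb_left s t; have := hb_right s t
    rw [hd]; linarith
  · intro s _ t _ u _
    have h1 := hb_three s t u
    have h2 := hb_left t u
    have h3 := hb_right s t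
    rw [hd, hd, hd]
    rcases min_cases (b s t) (b t u) with ⟨e, _⟩ | ⟨e, _⟩ <;> rw [e] at h1 <;> linarith
  · intro s₁ _ s₂ _ s₃ _ s₄ _
    have key : min (b s₁ s₃ + b s₂ s₄) (b s₁ s₄ + b s₂ s₃) ≤ b s₁ s₂ + b s₃ s₄ := by
      refine fourpt_abs ?_ ?_ ?_ ?_
      · have := hb_three s₁ s₄ s₂; rwa [hb_symm s₄ s₂] at this
      · have := hb_three s₁ s₃ s₂; rwa [hb_symm s₃ s₂] at this
      · have := hb_three s₃ s₁ s₄; rwa [hb_symm s₃ s₁] at this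
      · have := hb_three s₃ s₂ s₄; rwa [hb_symm s₃ s₂] at this
    rw [hd, hd, hd, hd, hd, hd]
    rcases min_cases (b s₁ s₃ + b s₂ s₄) (b s₁ s₄ + b s₂ s₃) with ⟨e, _⟩ | ⟨e, _⟩ <;>
      rw [e] at key
    · exact le_max_of_le_left (by linarith)
    · exact le_max_of_le_right (by linarith)
end
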